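/- (Indexability.) Assume h is nondecreasing. For λ ∈ ℝ, let θ*(λ) be the least minimizer of θ ↦ J(θ,λ) over {1,…,S+1}, and define the passive set D(λ) := {s ∈ {1,…,S} : s < θ*(λ)}. Then: (i) D(λ) ⊆ D(λ') whenever λ ≤ λ'; (ii) D(λ) = ∅ for every λ ≤ −τ; (iii) there exists λ̄ ∈ ℝ such that D(λ) = {1,…,S} for every λ ≥ λ̄. -/

import Mathlib

open Finset

/-- β_{θ,ρ} = 1/(θ-1+1/ρ) -/
noncomputable def bet (ρ : ℝ) (θ : ℕ) : ℝ := 1 / ((θ : ℝ) - 1 + 1 / ρ)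

/-- Stationary distribution d^θ on {1,…,S} under the threshold policy θ;
for θ = S+1 it is the point mass at S. -/
noncomputable def dstat (S : ℕ) (ρ : ℝ) (θ : ℕ) (z : ℕ) : ℝ :=
  if θ = S + 1 then (if z = S then 1 else 0)
  else if z < θ then bet ρ θ
  else if z < S then (1 - ρ) ^ (z - θ) * bet ρ θ
  else (1 - ρ) ^ (S - θ) * bet ρ θ / ρ

/-- Average cost J(θ,λ) = Σ_z d^θ(z)h(z) + (λ+τ)·Σ_{z=θ}^S d^θ(z). -/
noncomputable def Jcost (S : ℕ) (ρ : ℝ) (h : ℕ → ℝ) (τ : ℝ) (θ : ℕ) (lam : ℝ) : ℝ :=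
  (∑ z ∈ Finset.Icc 1 S, dstat S ρ θ z * h z)
    + (lam + τ) * ∑ z ∈ Finset.Icc θ S, dstat S ρ θ z

/-- θs is the least minimizer of θ ↦ J(θ,λ) over {1,…,S+1}. -/
def IsLeastMinimizer (S : ℕ) (ρ : ℝ) (h : ℕ → ℝ) (τ : ℝ) (lam : ℝ) (θs : ℕ) : Prop :=
  θs ∈ Finset.Icc 1 (S + 1) ∧
  (∀ ξ ∈ Finset.Icc 1 (S + 1), Jcost S ρ h τ θs lam ≤ Jcost S ρ h τ ξ lam) ∧
  (∀ ξ ∈ Finset.Icc 1 (S + 1),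
    (∀ ζ ∈ Finset.Icc 1 (S + 1), Jcost S ρ h τ ξ lam ≤ Jcost S ρ h τ ζ lam) → θs ≤ ξ)

section Aux
variable {S : ℕ} {ρ : ℝ}

lemma bet_denom_pos (hρ0 : 0 < ρ) {θ : ℕ} (hθ : 1 ≤ θ) : 0 < (θ:ℝ) - 1 + 1/ρ := by
  have h1 : (0:ℝ) < 1/ρ := by positivity
  have h2 : (1:ℝ) ≤ (θ:ℝ) := by exact_mod_cast hθ
  linarith

lemma bet_pos (hρ0 : 0 < ρ) {θ : ℕ} (hθ : 1 ≤ θ) : 0 < bet ρ θ := by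
  unfold bet; exact one_div_pos.mpr (bet_denom_pos hρ0 hθ)

lemma dstat_nonneg (hρ0 : 0 < ρ) (hρ1 : ρ ≤ 1) {θ : ℕ} (hθ : 1 ≤ θ) (z : ℕ) :
    0 ≤ dstat S ρ θ z := by
  have hb : 0 ≤ bet ρ θ := (bet_pos hρ0 hθ).le
  have hq : (0:ℝ) ≤ 1 - ρ := by linarith
  unfold dstat
  split_ifs <;> positivity

/-- Bernoulli-type inequality. -/
lemma bern (hρ0 : 0 < ρ) (hρ1 : ρ ≤ 1) (m : ℕ) : (1 + (m:ℝ)*ρ) * (1-ρ)^m ≤ 1 := by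
  induction m with
  | zero => simp
  | succ n ih =>
    have hq : (0:ℝ) ≤ 1 - ρ := by linarith
    have hqn : (0:ℝ) ≤ (1-ρ)^n := by positivity
    have hn : (0:ℝ) ≤ (n:ℝ) := Nat.cast_nonneg n
    have key : (1 + ((n:ℝ)+1)*ρ) * (1-ρ) ≤ 1 + (n:ℝ)*ρ := by nlinarith [sq_nonneg ρ, mul_nonneg hn (sq_nonneg ρ)]
    calc (1 + ((n+1:ℕ):ℝ)*ρ) * (1-ρ)^(n+1)
        = ((1 + ((n:ℝ)+1)*ρ) * (1-ρ)) * (1-ρ)^n := by push_cast; ring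
      _ ≤ (1 + (n:ℝ)*ρ) * (1-ρ)^n := by nlinarith
      _ ≤ 1 := ih

/-- Tail sum for k ≥ θ. -/
lemma tail_sum_hi (hρ0 : 0 < ρ) {θ k : ℕ} (hθ : 1 ≤ θ) (hθS : θ ≤ S) (hkθ : θ ≤ k)
    (hkS : k ≤ S) :
    ∑ z ∈ Finset.Icc k S, dstat S ρ θ z = (1-ρ)^(k-θ) * bet ρ θ / ρ := by
  have hne : θ ≠ S + 1 := by omega
  have hq1 : (1:ℝ) - ρ ≠ 1 := by intro hcon; have : ρ = 0 := by linarith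
                                 exact hρ0.ne' this
  have hIcc : Finset.Icc k S = Finset.Ico k (S+1) := by
    ext x; simp [Finset.mem_Icc, Finset.mem_Ico]
  rw [hIcc, Finset.sum_Ico_eq_sum_range]
  have hrange : S + 1 - k = (S - k) + 1 := by omega
  rw [hrange, Finset.sum_range_succ]
  have hlast : dstat S ρ θ (k + (S - k)) = (1-ρ)^(S-θ) * bet ρ θ / ρ := by
    have hkS' : k + (S - k) = S := by omega
    rw [hkS']
    unfold dstat
    rw [if_neg hne, if_neg (by omega), if_neg (by omega)]
  rw [hlast]
  have hbody : ∀ j ∈ Finset.range (S - k), dstat S ρ θ (k + j)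
      = ((1-ρ)^(k-θ) * bet ρ θ) * (1-ρ)^j := by
    intro j hj
    rw [Finset.mem_range] at hj
    unfold dstat
    rw [if_neg hne, if_neg (by omega), if_pos (by omega)]
    have : k + j - θ = (k - θ) + j := by omega
    rw [this, pow_add]; ring
  rw [Finset.sum_congr rfl hbody, ← Finset.mul_sum, geom_sum_eq hq1]
  have hpow : (1-ρ)^(k-θ) * (1-ρ)^(S-k) = (1-ρ)^(S-θ) := by
    rw [← pow_add]; congr 1; omega
  have hρ' : ρ ≠ 0 := hρ0.ne'
  have hd : (1:ℝ) - ρ - 1 = -ρ := by ring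
  rw [hd]
  have h1 : ((1-ρ)^(S-k) - 1)/(-ρ) = -(((1-ρ)^(S-k) - 1) * ρ⁻¹) := by
    rw [div_neg, div_eq_mul_inv]
  rw [h1, div_eq_mul_inv, div_eq_mul_inv]
  linear_combination (-(bet ρ θ) * ρ⁻¹) * hpow

/-- Tail sum for k ≤ θ. -/
lemma tail_sum_lo (hρ0 : 0 < ρ) {θ k : ℕ} (hk : 1 ≤ k) (hkθ : k ≤ θ) (hθS : θ ≤ S) :
    ∑ z ∈ Finset.Icc k S, dstat S ρ θ z = ((θ:ℝ) - k) * bet ρ θ + bet ρ θ / ρ := by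
  have hne : θ ≠ S + 1 := by omega
  have hIcc : Finset.Icc k S = Finset.Ico k (S+1) := by
    ext x; simp [Finset.mem_Icc, Finset.mem_Ico]
  rw [hIcc, ← Finset.sum_Ico_consecutive _ (by omega : k ≤ θ) (by omega : θ ≤ S+1)]
  have h1 : ∑ z ∈ Finset.Ico k θ, dstat S ρ θ z = ((θ:ℝ) - k) * bet ρ θ := by
    have hbody : ∀ z ∈ Finset.Ico k θ, dstat S ρ θ z = bet ρ θ := by
      intro z hz; rw [Finset.mem_Ico] at hz
      unfold dstat; rw [if_neg hne, if_pos hz.2]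
    rw [Finset.sum_congr rfl hbody, Finset.sum_const, Nat.card_Ico, nsmul_eq_mul]
    rw [Nat.cast_sub hkθ]
  have h2 : ∑ z ∈ Finset.Ico θ (S+1), dstat S ρ θ z = bet ρ θ / ρ := by
    have : Finset.Ico θ (S+1) = Finset.Icc θ S := by
      ext x; simp [Finset.mem_Icc, Finset.mem_Ico]
    rw [this, tail_sum_hi hρ0 (by omega) hθS le_rfl hθS]
    simp
  rw [h1, h2]

lemma mass_sum (hρ0 : 0 < ρ) {θ : ℕ} (hθ : 1 ≤ θ) (hθS : θ ≤ S + 1) (hS : 1 ≤ S) :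
    ∑ z ∈ Finset.Icc 1 S, dstat S ρ θ z = 1 := by
  rcases eq_or_lt_of_le hθS with hEq | hlt
  · -- θ = S+1 : point mass
    have hbody : ∀ z ∈ Finset.Icc 1 S, dstat S ρ θ z = if z = S then 1 else 0 := by
      intro z hz; unfold dstat; rw [if_pos hEq]
    rw [Finset.sum_congr rfl hbody,
      Finset.sum_eq_single_of_mem S (by simp [Finset.mem_Icc]; omega)
        (fun b _ hb => by simp [hb])]
    simp
  · have hθS' : θ ≤ S := by omega
    rw [tail_sum_lo hρ0 le_rfl hθ hθS']
    have hd := bet_denom_pos hρ0 hθ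
    have hb : bet ρ θ * ((θ:ℝ) - 1 + 1/ρ) = 1 := by
      unfold bet; exact one_div_mul_cancel hd.ne'
    push_cast
    calc ((θ:ℝ) - 1) * bet ρ θ + bet ρ θ / ρ
        = bet ρ θ * ((θ:ℝ) - 1 + 1/ρ) := by rw [div_eq_mul_inv, one_div]; ring
      _ = 1 := hb
end Aux

section Aux2
variable {S : ℕ} {ρ : ℝ}

lemma abel_step (S : ℕ) (h e : ℕ → ℝ)
    (hmono : ∀ a ∈ Finset.Icc 1 S, ∀ b ∈ Finset.Icc 1 S, a ≤ b → h a ≤ h b)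
    (hT : ∀ k, 1 ≤ k → k ≤ S → 0 ≤ ∑ z ∈ Finset.Icc k S, e z) :
    ∀ n, n ≤ S → h (S+1-n) * (∑ z ∈ Finset.Icc (S+1-n) S, e z)
      ≤ ∑ z ∈ Finset.Icc (S+1-n) S, e z * h z := by
  intro n
  induction n with
  | zero =>
    intro _
    have : Finset.Icc (S+1-0) S = ∅ := Finset.Icc_eq_empty (by omega)
    simp [this]
  | succ n ih =>
    intro hn
    set a := S - n with ha
    have hidx : S + 1 - (n+1) = a := by omega
    have hsucc : a + 1 = S + 1 - n := by omega
    have ha1 : 1 ≤ a := by omega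
    have haS : a ≤ S := by omega
    have hins : Finset.Icc a S = insert a (Finset.Icc (a+1) S) := by
      ext x; simp [Finset.mem_Icc, Finset.mem_insert]; omega
    have hnm : a ∉ Finset.Icc (a+1) S := by simp
    have hT1 : 0 ≤ ∑ z ∈ Finset.Icc (a+1) S, e z := by
      rcases le_or_gt (a+1) S with hc | hc
      · exact hT (a+1) (by omega) hc
      · have : Finset.Icc (a+1) S = ∅ := Finset.Icc_eq_empty (by omega)
        simp [this]
    have hih : h (a+1) * (∑ z ∈ Finset.Icc (a+1) S, e z)
        ≤ ∑ z ∈ Finset.Icc (a+1) S, e z * h z := by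
      have := ih (by omega)
      rwa [← hsucc] at this
    have hhm : h a * (∑ z ∈ Finset.Icc (a+1) S, e z)
        ≤ h (a+1) * (∑ z ∈ Finset.Icc (a+1) S, e z) := by
      rcases lt_or_eq_of_le haS with hc | hc
      · have hab : h a ≤ h (a+1) := hmono a (by simp [Finset.mem_Icc]; omega)
          (a+1) (by simp [Finset.mem_Icc]; omega) (by omega)
        exact mul_le_mul_of_nonneg_right hab hT1
      · have : Finset.Icc (a+1) S = ∅ := Finset.Icc_eq_empty (by omega)
        simp [this]
    rw [hidx, hins, Finset.sum_insert hnm, Finset.sum_insert hnm]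
    have hexp : h a * (e a + ∑ z ∈ Finset.Icc (a+1) S, e z)
        = e a * h a + h a * ∑ z ∈ Finset.Icc (a+1) S, e z := by ring
    rw [hexp]
    linarith

lemma abel_ge (S : ℕ) (hS : 1 ≤ S) (h e : ℕ → ℝ)
    (hmono : ∀ a ∈ Finset.Icc 1 S, ∀ b ∈ Finset.Icc 1 S, a ≤ b → h a ≤ h b)
    (hT : ∀ k, 1 ≤ k → k ≤ S → 0 ≤ ∑ z ∈ Finset.Icc k S, e z)
    (hT1 : ∑ z ∈ Finset.Icc 1 S, e z = 0) :
    0 ≤ ∑ z ∈ Finset.Icc 1 S, e z * h z := by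
  have := abel_step S h e hmono hT S le_rfl
  have hidx : S + 1 - S = 1 := by omega
  rw [hidx, hT1] at this
  simpa using this

lemma pow_le_inv_bern (hρ0 : 0 < ρ) (hρ1 : ρ ≤ 1) (m : ℕ) :
    (1-ρ)^m ≤ 1 / (1 + (m:ℝ)*ρ) := by
  have hden : (0:ℝ) < 1 + (m:ℝ)*ρ := by
    have : (0:ℝ) ≤ (m:ℝ)*ρ := by positivity
    linarith
  rw [le_div_iff₀ hden]
  have := bern hρ0 hρ1 m
  linarith [this]

lemma tail_dom (hρ0 : 0 < ρ) (hρ1 : ρ ≤ 1) {ξ k : ℕ} (hξ1 : 1 ≤ ξ) (hξS : ξ ≤ S)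
    (hk1 : 1 ≤ k) (hkS : k ≤ S) :
    ∑ z ∈ Finset.Icc k S, dstat S ρ 1 z ≤ ∑ z ∈ Finset.Icc k S, dstat S ρ ξ z := by
  have hρ' : ρ ≠ 0 := hρ0.ne'
  have hq : (0:ℝ) ≤ 1 - ρ := by linarith
  have hbet1 : bet ρ 1 = ρ := by
    unfold bet; push_cast; rw [show (1:ℝ) - 1 + 1/ρ = 1/ρ by ring, one_div_one_div]
  have hL : ∑ z ∈ Finset.Icc k S, dstat S ρ 1 z = (1-ρ)^(k-1) := by
    rw [tail_sum_hi hρ0 le_rfl (by omega) hk1 hkS, hbet1, mul_div_assoc,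
      div_self hρ', mul_one]
  rw [hL]
  have hdξ : (0:ℝ) < (ξ:ℝ) - 1 + 1/ρ := bet_denom_pos hρ0 hξ1
  have hbpos : 0 < bet ρ ξ := bet_pos hρ0 hξ1
  rcases le_or_gt ξ k with hc | hc
  · -- k ≥ ξ
    rw [tail_sum_hi hρ0 hξ1 hξS hc hkS]
    have hsplit : (1-ρ)^(k-1) = (1-ρ)^(k-ξ) * (1-ρ)^(ξ-1) := by
      rw [← pow_add]; congr 1; omega
    rw [hsplit, mul_div_assoc]
    apply mul_le_mul_of_nonneg_left _ (by positivity)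
    have hbern := pow_le_inv_bern hρ0 hρ1 (ξ-1)
    have hcast : ((ξ-1:ℕ):ℝ) = (ξ:ℝ) - 1 := by
      rw [Nat.cast_sub hξ1]; norm_num
    rw [hcast] at hbern
    have heq : bet ρ ξ / ρ = 1 / (1 + ((ξ:ℝ)-1)*ρ) := by
      unfold bet; rw [div_div]; congr 1; field_simp; ring
    rw [heq]
    exact hbern
  · -- k < ξ
    rw [tail_sum_lo hρ0 hk1 (by omega) hξS]
    have hbern := pow_le_inv_bern hρ0 hρ1 (k-1)
    have hcast : ((k-1:ℕ):ℝ) = (k:ℝ) - 1 := by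
      rw [Nat.cast_sub hk1]; norm_num
    rw [hcast] at hbern
    have hdk : (0:ℝ) < 1 + ((k:ℝ)-1)*ρ := by
      have h1 : (1:ℝ) ≤ (k:ℝ) := by exact_mod_cast hk1
      nlinarith
    have hkξ : (k:ℝ) ≤ (ξ:ℝ) := by exact_mod_cast hc.le
    have h1ξ : (1:ℝ) ≤ (ξ:ℝ) := by exact_mod_cast hξ1
    have hd2 : (0:ℝ) < ρ*((ξ:ℝ)-1) + 1 := by nlinarith [mul_nonneg hρ0.le (sub_nonneg.mpr h1ξ)]
    have hbet : bet ρ ξ = ρ / (ρ*((ξ:ℝ)-1)+1) := by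
      unfold bet
      rw [div_eq_div_iff hdξ.ne' hd2.ne']
      field_simp
    have hRHS : ((ξ:ℝ) - k) * bet ρ ξ + bet ρ ξ / ρ
        = (ρ*((ξ:ℝ)-k) + 1) / (ρ*((ξ:ℝ)-1) + 1) := by
      rw [hbet, eq_div_iff hd2.ne']
      field_simp
    rw [hRHS]
    have hstep : 1 / (1 + ((k:ℝ)-1)*ρ) ≤ (ρ*((ξ:ℝ)-k) + 1) / (ρ*((ξ:ℝ)-1) + 1) := by
      rw [div_le_div_iff₀ hdk hd2]
      have h1 : (1:ℝ) ≤ (k:ℝ) := by exact_mod_cast hk1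
      nlinarith [mul_nonneg (mul_nonneg (sub_nonneg.mpr hkξ) (sub_nonneg.mpr h1)) (sq_nonneg ρ), sq_nonneg ρ]
    exact le_trans hbern hstep
end Aux2

section Aux3
variable {S : ℕ} {ρ : ℝ}

lemma Epos (hρ0 : 0 < ρ) {θ : ℕ} (hθ1 : 1 ≤ θ) : (0:ℝ) < ρ*((θ:ℝ)-1)+1 := by
  have h1 : (1:ℝ) ≤ (θ:ℝ) := by exact_mod_cast hθ1
  nlinarith [mul_nonneg hρ0.le (sub_nonneg.mpr h1)]

lemma bet_eq (hρ0 : 0 < ρ) {θ : ℕ} (hθ1 : 1 ≤ θ) :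
    bet ρ θ = ρ / (ρ*((θ:ℝ)-1)+1) := by
  have hρ' : ρ ≠ 0 := hρ0.ne'
  unfold bet
  rw [div_eq_div_iff (bet_denom_pos hρ0 hθ1).ne' (Epos hρ0 hθ1).ne']
  field_simp

lemma P_eq (hρ0 : 0 < ρ) {θ : ℕ} (hθ1 : 1 ≤ θ) (hθS : θ ≤ S) :
    ∑ z ∈ Finset.Icc θ S, dstat S ρ θ z = 1 / (ρ*((θ:ℝ)-1)+1) := by
  have hρ' : ρ ≠ 0 := hρ0.ne'
  rw [tail_sum_hi hρ0 hθ1 hθS le_rfl hθS]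
  simp only [Nat.sub_self, pow_zero, one_mul]
  rw [bet_eq hρ0 hθ1, div_div, mul_comm (ρ*((θ:ℝ)-1)+1) ρ, ← div_div, div_self hρ']

lemma P_empty : ∑ z ∈ Finset.Icc (S+1) S, dstat S ρ (S+1) z = 0 := by
  rw [Finset.Icc_eq_empty (by omega)]; simp

lemma P_lt (hρ0 : 0 < ρ) {θ θ' : ℕ} (hθ1 : 1 ≤ θ) (hlt : θ < θ') (hθ'S : θ' ≤ S+1) :
    ∑ z ∈ Finset.Icc θ' S, dstat S ρ θ' z < ∑ z ∈ Finset.Icc θ S, dstat S ρ θ z := by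
  have hθS : θ ≤ S := by omega
  rw [P_eq hρ0 hθ1 hθS]
  have hpos : (0:ℝ) < 1 / (ρ*((θ:ℝ)-1)+1) := one_div_pos.mpr (Epos hρ0 hθ1)
  rcases eq_or_lt_of_le hθ'S with hEq | hlt'
  · rw [hEq, P_empty]; exact hpos
  · have hθ'S' : θ' ≤ S := by omega
    rw [P_eq hρ0 (by omega) hθ'S']
    apply div_lt_div_of_pos_left one_pos (Epos hρ0 hθ1)
    have : (θ:ℝ) < (θ':ℝ) := by exact_mod_cast hlt
    nlinarith

lemma A_ub (hρ0 : 0 < ρ) (hρ1 : ρ ≤ 1) (hS : 1 ≤ S) (h : ℕ → ℝ)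
    (hmono : ∀ a ∈ Finset.Icc 1 S, ∀ b ∈ Finset.Icc 1 S, a ≤ b → h a ≤ h b)
    {θ : ℕ} (hθ1 : 1 ≤ θ) (hθS : θ ≤ S + 1) :
    ∑ z ∈ Finset.Icc 1 S, dstat S ρ θ z * h z ≤ h S := by
  have hSmem : S ∈ Finset.Icc 1 S := by simp [Finset.mem_Icc, hS]
  calc ∑ z ∈ Finset.Icc 1 S, dstat S ρ θ z * h z
      ≤ ∑ z ∈ Finset.Icc 1 S, dstat S ρ θ z * h S := by
        apply Finset.sum_le_sum
        intro z hz
        exact mul_le_mul_of_nonneg_left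
          (hmono z hz S hSmem (Finset.mem_Icc.1 hz).2) (dstat_nonneg hρ0 hρ1 hθ1 z)
    _ = (∑ z ∈ Finset.Icc 1 S, dstat S ρ θ z) * h S := by rw [← Finset.sum_mul]
    _ = h S := by rw [mass_sum hρ0 hθ1 hθS hS, one_mul]

lemma A_lb (hρ0 : 0 < ρ) (hρ1 : ρ ≤ 1) (hS : 1 ≤ S) (h : ℕ → ℝ)
    (hmono : ∀ a ∈ Finset.Icc 1 S, ∀ b ∈ Finset.Icc 1 S, a ≤ b → h a ≤ h b)
    {θ : ℕ} (hθ1 : 1 ≤ θ) (hθS : θ ≤ S + 1) :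
    h 1 ≤ ∑ z ∈ Finset.Icc 1 S, dstat S ρ θ z * h z := by
  have h1mem : (1:ℕ) ∈ Finset.Icc 1 S := by simp [Finset.mem_Icc, hS]
  calc h 1 = (∑ z ∈ Finset.Icc 1 S, dstat S ρ θ z) * h 1 := by
        rw [mass_sum hρ0 hθ1 hθS hS, one_mul]
    _ = ∑ z ∈ Finset.Icc 1 S, dstat S ρ θ z * h 1 := by rw [Finset.sum_mul]
    _ ≤ ∑ z ∈ Finset.Icc 1 S, dstat S ρ θ z * h z := by
        apply Finset.sum_le_sum
        intro z hz
        exact mul_le_mul_of_nonneg_left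
          (hmono 1 h1mem z hz (Finset.mem_Icc.1 hz).1) (dstat_nonneg hρ0 hρ1 hθ1 z)

lemma A_top (hS : 1 ≤ S) (h : ℕ → ℝ) :
    ∑ z ∈ Finset.Icc 1 S, dstat S ρ (S+1) z * h z = h S := by
  have hbody : ∀ z ∈ Finset.Icc 1 S, dstat S ρ (S+1) z * h z
      = if z = S then h S else 0 := by
    intro z hz
    unfold dstat
    rw [if_pos rfl]
    split_ifs with hzS
    · rw [hzS, one_mul]
    · rw [zero_mul]
  rw [Finset.sum_congr rfl hbody,
    Finset.sum_eq_single_of_mem S (by simp [Finset.mem_Icc, hS])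
      (fun b _ hb => if_neg hb)]
  simp

lemma A_dom (hρ0 : 0 < ρ) (hρ1 : ρ ≤ 1) (hS : 1 ≤ S) (h : ℕ → ℝ)
    (hmono : ∀ a ∈ Finset.Icc 1 S, ∀ b ∈ Finset.Icc 1 S, a ≤ b → h a ≤ h b)
    {ξ : ℕ} (hξ1 : 1 ≤ ξ) (hξS : ξ ≤ S + 1) :
    ∑ z ∈ Finset.Icc 1 S, dstat S ρ 1 z * h z
      ≤ ∑ z ∈ Finset.Icc 1 S, dstat S ρ ξ z * h z := by
  rcases eq_or_lt_of_le hξS with hEq | hlt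
  · rw [hEq, A_top hS h]
    exact A_ub hρ0 hρ1 hS h hmono le_rfl (by omega)
  · have hξS' : ξ ≤ S := by omega
    have key := abel_ge S hS h (fun z => dstat S ρ ξ z - dstat S ρ 1 z) hmono
      (fun k hk1 hkS => by
        rw [Finset.sum_sub_distrib]
        exact sub_nonneg.mpr (tail_dom hρ0 hρ1 hξ1 hξS' hk1 hkS))
      (by
        rw [Finset.sum_sub_distrib, mass_sum hρ0 hξ1 (by omega) hS,
          mass_sum hρ0 le_rfl (by omega) hS]
        ring)
    have : ∑ z ∈ Finset.Icc 1 S, (dstat S ρ ξ z - dstat S ρ 1 z) * h z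
        = ∑ z ∈ Finset.Icc 1 S, dstat S ρ ξ z * h z
          - ∑ z ∈ Finset.Icc 1 S, dstat S ρ 1 z * h z := by
      rw [← Finset.sum_sub_distrib]
      exact Finset.sum_congr rfl (fun z _ => by ring)
    rw [this] at key
    linarith

end Aux3


/-- Indexability: the passive set D(λ) = {s ∈ {1,…,S} : s < θ*(λ)}
is monotone in λ, empty for λ ≤ -τ, and equals {1,…,S} for all large λ. -/
theorem indexability
    (S : ℕ) (hS : 2 ≤ S) (ρ : ℝ) (hρ0 : 0 < ρ) (hρ1 : ρ ≤ 1)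
    (h : ℕ → ℝ)
    (hmono : ∀ a ∈ Finset.Icc 1 S, ∀ b ∈ Finset.Icc 1 S, a ≤ b → h a ≤ h b)
    (τ : ℝ)
    (θstar : ℝ → ℕ) (hθstar : ∀ lam : ℝ, IsLeastMinimizer S ρ h τ lam (θstar lam))
    (D : ℝ → Set ℕ)
    (hD : ∀ lam : ℝ, D lam = {s : ℕ | s ∈ Set.Icc 1 S ∧ s < θstar lam}) :
    (∀ lam lam' : ℝ, lam ≤ lam' → D lam ⊆ D lam') ∧
    (∀ lam : ℝ, lam ≤ -τ → D lam = ∅) ∧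
    (∃ lamBar : ℝ, ∀ lam : ℝ, lamBar ≤ lam → D lam = Set.Icc 1 S) := by
  have hS1 : 1 ≤ S := by omega
  refine ⟨?_, ?_, ?_⟩
  · -- (i) monotonicity
    have hmono_star : ∀ lam lam' : ℝ, lam ≤ lam' → θstar lam ≤ θstar lam' := by
      intro lam lam' hle
      by_contra hcon
      push_neg at hcon
      rcases eq_or_lt_of_le hle with rfl | hlt
      · omega
      obtain ⟨hmem, hminzr, hleast⟩ := hθstar lam
      obtain ⟨hmem', hminzr', _⟩ := hθstar lam'
      have hnotmin : ¬ (∀ ζ ∈ Finset.Icc 1 (S+1),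
          Jcost S ρ h τ (θstar lam') lam ≤ Jcost S ρ h τ ζ lam) := by
        intro hmin
        exact absurd (hleast _ hmem' hmin) (by omega)
      push_neg at hnotmin
      obtain ⟨ζ, hζ, hζlt⟩ := hnotmin
      have h1 : Jcost S ρ h τ (θstar lam) lam < Jcost S ρ h τ (θstar lam') lam :=
        lt_of_le_of_lt (hminzr ζ hζ) hζlt
      have h2 : Jcost S ρ h τ (θstar lam') lam' ≤ Jcost S ρ h τ (θstar lam) lam' :=
        hminzr' _ hmem
      have hθ'1 : 1 ≤ θstar lam' := (Finset.mem_Icc.1 hmem').1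
      have hθtop : θstar lam ≤ S + 1 := (Finset.mem_Icc.1 hmem).2
      have hP := P_lt (S := S) hρ0 hθ'1 hcon hθtop
      simp only [Jcost] at h1 h2
      nlinarith [mul_pos (sub_pos.mpr hlt) (sub_pos.mpr hP)]
    intro lam lam' hle s hs
    rw [hD] at hs ⊢
    exact ⟨hs.1, lt_of_lt_of_le hs.2 (hmono_star lam lam' hle)⟩
  · -- (ii) empty for lam ≤ -τ
    intro lam hlam
    have hτ : lam + τ ≤ 0 := by linarith
    have hmin1 : ∀ ξ ∈ Finset.Icc 1 (S+1),
        Jcost S ρ h τ 1 lam ≤ Jcost S ρ h τ ξ lam := by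
      intro ξ hξ
      rw [Finset.mem_Icc] at hξ
      have hA := A_dom hρ0 hρ1 hS1 h hmono hξ.1 hξ.2
      have hP : ∑ z ∈ Finset.Icc ξ S, dstat S ρ ξ z
          ≤ ∑ z ∈ Finset.Icc 1 S, dstat S ρ 1 z := by
        rcases eq_or_lt_of_le hξ.1 with hEq | hlt
        · rw [← hEq]
        · exact (P_lt (S := S) hρ0 le_rfl hlt hξ.2).le
      simp only [Jcost]
      nlinarith [mul_nonneg (neg_nonneg.mpr hτ) (sub_nonneg.mpr hP)]
    obtain ⟨hmem, _, hleast⟩ := hθstar lam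
    have hone : θstar lam = 1 := by
      have h1 := hleast 1 (by simp [Finset.mem_Icc]) hmin1
      have h2 := (Finset.mem_Icc.1 hmem).1
      omega
    rw [hD, hone]
    ext s
    simp [Set.mem_Icc]
    omega
  · -- (iii) full for large lam
    set c : ℝ := 1 / (ρ*((S:ℝ)-1)+1) with hc_def
    have hc : 0 < c := one_div_pos.mpr (Epos hρ0 hS1)
    refine ⟨max (-τ) ((h S - h 1)/c - τ) + 1, fun lam hlam => ?_⟩
    have hτpos : 0 < lam + τ := by
      have := le_max_left (-τ) ((h S - h 1)/c - τ)
      linarith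
    have hbig : h S - h 1 < (lam + τ) * c := by
      have h2 : (h S - h 1)/c < lam + τ := by
        have := le_max_right (-τ) ((h S - h 1)/c - τ)
        linarith
      calc h S - h 1 = (h S - h 1)/c * c := by field_simp
        _ < (lam + τ) * c := by
            exact mul_lt_mul_of_pos_right h2 hc
    have hJtop : Jcost S ρ h τ (S+1) lam = h S := by
      simp only [Jcost]
      rw [A_top hS1 h, P_empty, mul_zero, add_zero]
    have hJlt : ∀ θ, 1 ≤ θ → θ ≤ S → Jcost S ρ h τ (S+1) lam < Jcost S ρ h τ θ lam := by
      intro θ hθ1 hθS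
      rw [hJtop]
      have hA := A_lb hρ0 hρ1 hS1 h hmono hθ1 (by omega)
      have hPc : c ≤ ∑ z ∈ Finset.Icc θ S, dstat S ρ θ z := by
        rcases eq_or_lt_of_le hθS with hEq | hlt
        · rw [P_eq hρ0 hθ1 hθS, hEq]
        · rw [P_eq hρ0 hθ1 hθS, hc_def]
          apply div_le_div_of_nonneg_left one_pos.le (Epos hρ0 hθ1)
          have : (θ:ℝ) ≤ (S:ℝ) := by exact_mod_cast hθS
          nlinarith
      simp only [Jcost]
      nlinarith [mul_le_mul_of_nonneg_left hPc hτpos.le]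
    obtain ⟨hmem, hminzr, _⟩ := hθstar lam
    have hstar : θstar lam = S + 1 := by
      by_contra hcon
      have hθS' : θstar lam ≤ S := by
        have := Finset.mem_Icc.1 hmem
        omega
      have hθ1' : 1 ≤ θstar lam := (Finset.mem_Icc.1 hmem).1
      have h1 := hminzr (S+1) (by simp [Finset.mem_Icc])
      have h2 := hJlt (θstar lam) hθ1' hθS'
      linarith
    rw [hD, hstar]
    ext s
    simp [Set.mem_Icc]
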